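/- arXiv:0706.1022 — 3 statements merged into one kernel-verified Lean document; each statement's English description precedes it below -/
import Mathlib

section
/- Let ξ be a real quadratic irrational number (an irrational real number that is algebraic of degree 2 over ℚ) and let n be a positive integer. There exists a constant c > 0 (depending only on ξ and n) with the following property: for every algebraic integer α of degree n+1 over ℚ none of whose conjugates equals ξ, and for every choice of n of the conjugates α₁, …, αₙ of α, one has max_{1 ≤ i ≤ n} |ξ − αᵢ| ≥ c · H(α)^{-2/n}. -/
open Polynomial

/-- The height of an integer polynomial: the largest absolute value of its coefficients. -/
noncomputable def intPolyHeight (P : Polynomial ℤ) : ℝ :=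
  ((P.support.sup fun k => (P.coeff k).natAbs : ℕ) : ℝ)

/-- The `k`-th divided derivative of a real polynomial at `ξ`, i.e. the coefficient of
`(T - ξ)^k` in the Taylor expansion of `P` at `ξ`. -/
noncomputable def divDeriv (ξ : ℝ) (P : Polynomial ℝ) (k : ℕ) : ℝ :=
  (Polynomial.taylor ξ P).coeff k

/-- The `k`-th divided derivative at `ξ` of an integer polynomial, viewed over `ℝ`. -/
noncomputable def divDerivZ (ξ : ℝ) (P : Polynomial ℤ) (k : ℕ) : ℝ :=
  divDeriv ξ (P.map (Int.castRingHom ℝ)) k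

/-- The multiset of complex roots of an integer polynomial (the conjugates of `α`, when `P`
is the irreducible polynomial of `α`). -/
noncomputable def conjRoots (P : Polynomial ℤ) : Multiset ℂ :=
  (P.map (Int.castRingHom ℂ)).roots

/-- `q ≥ 1` is the denominator of a convergent of the continued fraction expansion of `ξ`. -/
def IsConvergentDenom (ξ : ℝ) (q : ℕ) : Prop :=
  1 ≤ q ∧ ∃ i : ℕ, (GenContFract.of ξ).dens i = (q : ℝ)

/-!
Since `ξ` is a quadratic irrational, Liouville's inequality gives `|R ξ + S| ≫ 1 / |R|` for
integers `R, S`. Reducing the powers of `a ξ` (with `a` the leading coefficient of the quadratic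
equation of `ξ`) modulo that equation writes `a ^ d P(ξ)` as `R ξ + S` with `|R| ≪ H(P)`, so
`|P(ξ)| ≫ 1 / H(P)` whenever `P(ξ) ≠ 0`. For monic `P`, `|P(ξ)|` is the product of the distances
from `ξ` to all `n + 1` conjugates; by Cauchy's bound the omitted conjugate is at distance
`≪ H(P)`, so the product of the `n` chosen distances is `≫ H(P) ^ (-2)` and the largest of them is
`≫ H(P) ^ (-2 / n)`.
-/

theorem abs_coeff_le_intPolyHeight (P : ℤ[X]) (k : ℕ) : |(P.coeff k : ℝ)| ≤ intPolyHeight P := by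
  by_cases hk : k ∈ P.support
  · rw [intPolyHeight, ← Int.cast_abs, ← Int.natCast_natAbs, Int.cast_natCast, Nat.cast_le]
    exact Finset.le_sup (f := fun k => (P.coeff k).natAbs) hk
  · simp [Polynomial.notMem_support_iff.mp hk, intPolyHeight]

theorem one_le_intPolyHeight {P : ℤ[X]} (hP : P ≠ 0) : 1 ≤ intPolyHeight P := by
  have h := abs_coeff_le_intPolyHeight P P.natDegree
  rw [coeff_natDegree, ← Int.cast_abs] at h
  exact le_trans (by exact_mod_cast Int.one_le_abs (leadingCoeff_ne_zero.mpr hP)) h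

theorem Multiset.exists_le_of_pow_card_le_prod_map {ι R : Type*} [CommSemiring R] [LinearOrder R]
    [IsStrictOrderedRing R] {s : Multiset ι} (hs : s ≠ 0) {f : ι → R} (hf : ∀ i ∈ s, 0 < f i)
    {t : R} (ht : t ^ card s ≤ (s.map f).prod) : ∃ i ∈ s, t ≤ f i := by
  by_contra! h
  have := Multiset.prod_map_lt_prod_map hs f (fun _ => t) hf h
  rw [Multiset.map_const', Multiset.prod_replicate] at this
  exact this.not_ge ht

theorem Multiset.exists_eq_add_singleton_of_le {α : Type*} {s t : Multiset α} (hst : s ≤ t)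
    (hcard : card t = card s + 1) : ∃ a, t = s + {a} := by
  obtain ⟨u, rfl⟩ := Multiset.le_iff_exists_add.mp hst
  obtain ⟨a, rfl⟩ := Multiset.card_eq_one.mp (by simpa using hcard)
  exact ⟨a, rfl⟩

theorem Real.rpow_inv_mul_rpow_neg_two_div_pow {a H : ℝ} (ha : 0 ≤ a) (hH : 0 ≤ H) {n : ℕ}
    (hn : n ≠ 0) :
    (a ^ (n : ℝ)⁻¹ * H ^ (-2 / (n : ℝ))) ^ n = a / H ^ 2 := by
  have hn' : (n : ℝ) ≠ 0 := Nat.cast_ne_zero.mpr hn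
  rw [mul_pow, ← Real.rpow_mul_natCast ha, ← Real.rpow_mul_natCast hH, inv_mul_cancel₀ hn',
    div_mul_cancel₀ _ hn', Real.rpow_one, Real.rpow_neg hH, Real.rpow_two, div_eq_mul_inv]

theorem exists_int_natDegree_eq_aeval_eq_zero {A : Type*} [CommRing A] [Algebra ℚ A] {x : A}
    {p : ℚ[X]} (hpx : aeval x p = 0) : ∃ f : ℤ[X], f.natDegree = p.natDegree ∧ aeval x f = 0 := by
  obtain ⟨b, hb, hbp⟩ := IsLocalization.integerNormalization_spec (nonZeroDivisors ℤ) p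
  refine ⟨_, ?_, IsLocalization.integerNormalization_aeval_eq_zero (nonZeroDivisors ℤ) p hpx⟩
  rw [← natDegree_map_eq_of_injective (algebraMap ℤ ℚ).injective_int, hbp,
    natDegree_smul _ (nonZeroDivisors.ne_zero hb)]

theorem aeval_eq_of_natDegree_eq_two {A : Type*} [CommRing A] (f : ℤ[X]) (hf : f.natDegree = 2)
    (x : A) :
    aeval x f = f.coeff 2 * x ^ 2 + f.coeff 1 * x + f.coeff 0 := by
  rw [aeval_eq_sum_range, hf, Finset.sum_range_succ, Finset.sum_range_succ, Finset.sum_range_one]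
  simp only [Algebra.smul_def, eq_intCast, pow_zero, pow_one, mul_one]
  ring

theorem exists_int_leadingCoeff_pow_mul_pow_eq {ξ : ℝ} {f : ℤ[X]} (hf : f.natDegree = 2)
    (hfξ : aeval ξ f = 0) (k : ℕ) :
    ∃ r s : ℤ, (f.leadingCoeff : ℝ) ^ k * ξ ^ k = r * ξ + s := by
  induction k with
  | zero => exact ⟨0, 1, by simp⟩
  | succ k ih =>
    obtain ⟨r, s, h⟩ := ih
    rw [aeval_eq_of_natDegree_eq_two f hf] at hfξ
    refine ⟨f.leadingCoeff * s - f.coeff 1 * r, - f.coeff 0 * r, ?_⟩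
    rw [leadingCoeff, hf] at h ⊢
    push_cast
    linear_combination (f.coeff 2 * ξ) * h + r * hfξ

theorem Irrational.exists_pos_le_mul_abs_mul_add_of_quadratic {ξ : ℝ} (hξ : Irrational ξ)
    {f : ℤ[X]} (hf : f.natDegree = 2) (hfξ : aeval ξ f = 0) :
    ∃ δ > 0, ∀ R S : ℤ, (R : ℝ) * ξ + S ≠ 0 → δ ≤ (|(R : ℝ)| + 1) * |R * ξ + S| := by
  obtain ⟨A, hA, hlio⟩ := Liouville.exists_pos_real_of_irrational_root hξ
    (f := f) (by rintro rfl; simp at hf) (by rwa [eval_map_algebraMap])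
  rw [hf] at hlio
  refine ⟨min 1 A⁻¹, by positivity, fun R S hRS => ?_⟩
  rcases eq_or_ne R 0 with rfl | hR
  · have hS : (1 : ℝ) ≤ |(S : ℝ)| := mod_cast Int.one_le_abs (by rintro rfl; simp at hRS)
    simpa using (min_le_left _ _).trans hS
  wlog hRpos : 0 < R generalizing R S
  · have hneg : ((-R : ℤ) : ℝ) * ξ + ((-S : ℤ) : ℝ) = -(R * ξ + S) := by push_cast; ring
    have h := this (-R) (-S) (by rwa [hneg, neg_ne_zero]) (neg_ne_zero.mpr hR) (by omega)
    rwa [hneg, abs_neg, Int.cast_neg, abs_neg] at h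
  obtain ⟨b, rfl⟩ : ∃ b : ℕ, R = b + 1 := ⟨R.toNat - 1, by omega⟩
  have hb : (0 : ℝ) < b + 1 := by positivity
  have h := hlio (-S) b
  have hdist : ξ - ((-S : ℤ) : ℝ) / (b + 1) = (((b + 1 : ℤ) : ℝ) * ξ + S) / (b + 1) := by
    push_cast
    field_simp
    ring
  rw [hdist, abs_div, abs_of_pos hb] at h
  calc min 1 A⁻¹ ≤ A⁻¹ := min_le_right _ _
    _ ≤ ((b : ℝ) + 1) * |((b + 1 : ℤ) : ℝ) * ξ + S| := by
      rw [inv_le_iff_one_le_mul₀ hA]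
      refine h.trans_eq ?_
      field_simp
    _ ≤ (|((b + 1 : ℤ) : ℝ)| + 1) * |((b + 1 : ℤ) : ℝ) * ξ + S| := by
      gcongr
      push_cast
      rw [abs_of_pos hb]
      linarith

theorem exists_leadingCoeff_pow_mul_aeval_eq {ξ : ℝ} {f : ℤ[X]} (hf : f.natDegree = 2)
    (hfξ : aeval ξ f = 0) (d : ℕ) :
    ∃ C ≥ 0, ∀ P : ℤ[X], P.natDegree ≤ d → ∃ R S : ℤ,
      |(R : ℝ)| ≤ C * intPolyHeight P ∧ (f.leadingCoeff : ℝ) ^ d * aeval ξ P = R * ξ + S := by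
  choose r s hrs using exists_int_leadingCoeff_pow_mul_pow_eq hf hfξ
  set a := f.leadingCoeff
  refine ⟨∑ k ∈ Finset.range (d + 1), |(a : ℝ) ^ (d - k) * r k|, by positivity, fun P hP =>
    ⟨∑ k ∈ Finset.range (d + 1), P.coeff k * a ^ (d - k) * r k,
      ∑ k ∈ Finset.range (d + 1), P.coeff k * a ^ (d - k) * s k, ?_, ?_⟩⟩
  · push_cast
    rw [Finset.sum_mul]
    refine (Finset.abs_sum_le_sum_abs _ _).trans (Finset.sum_le_sum fun k _ => ?_)
    rw [mul_assoc, abs_mul, mul_comm]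
    gcongr
    exact abs_coeff_le_intPolyHeight P k
  · rw [aeval_eq_sum_range' (Nat.lt_succ_of_le hP), Finset.mul_sum]
    push_cast
    rw [Finset.sum_mul, ← Finset.sum_add_distrib]
    refine Finset.sum_congr rfl fun k hk => ?_
    have hpow : (a : ℝ) ^ d = a ^ (d - k) * a ^ k := by
      rw [← pow_add, Nat.sub_add_cancel (Finset.mem_range_succ_iff.mp hk)]
    rw [Algebra.smul_def, eq_intCast, hpow]
    linear_combination ((P.coeff k : ℝ) * a ^ (d - k)) * hrs k

theorem Irrational.exists_pos_le_intPolyHeight_mul_abs_aeval_of_quadratic {ξ : ℝ}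
    (hξ : Irrational ξ) {f : ℤ[X]} (hf : f.natDegree = 2) (hfξ : aeval ξ f = 0) (d : ℕ) :
    ∃ κ > 0, ∀ P : ℤ[X], P.natDegree ≤ d → aeval ξ P ≠ 0 → κ ≤ intPolyHeight P * |aeval ξ P| := by
  obtain ⟨δ, hδ, hlin⟩ := hξ.exists_pos_le_mul_abs_mul_add_of_quadratic hf hfξ
  obtain ⟨C, hC, hrepr⟩ := exists_leadingCoeff_pow_mul_aeval_eq hf hfξ d
  have ha : f.leadingCoeff ≠ 0 := leadingCoeff_ne_zero.mpr (by rintro rfl; simp at hf)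
  refine ⟨δ / ((C + 1) * |(f.leadingCoeff : ℝ)| ^ d), by positivity, fun P hP hPξ => ?_⟩
  obtain ⟨R, S, hR, hRS⟩ := hrepr P hP
  have hH : 1 ≤ intPolyHeight P := one_le_intPolyHeight (by rintro rfl; simp at hPξ)
  rw [div_le_iff₀ (by positivity)]
  have hRS0 : (R : ℝ) * ξ + S ≠ 0 := by rw [← hRS]; exact mul_ne_zero (by positivity) hPξ
  calc δ ≤ (|(R : ℝ)| + 1) * |R * ξ + S| := hlin R S hRS0
    _ ≤ (C * intPolyHeight P + intPolyHeight P) * |R * ξ + S| := by gcongr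
    _ = intPolyHeight P * |aeval ξ P| * ((C + 1) * |(f.leadingCoeff : ℝ)| ^ d) := by
      rw [← hRS, abs_mul, abs_pow]
      ring

theorem card_conjRoots (P : ℤ[X]) : Multiset.card (conjRoots P) = P.natDegree :=
  IsAlgClosed.card_aroots_eq_natDegree

theorem norm_le_intPolyHeight_add_one_of_mem_conjRoots {P : ℤ[X]} (hP : P.Monic) {z : ℂ}
    (hz : z ∈ conjRoots P) : ‖z‖ ≤ intPolyHeight P + 1 := by
  have hP' : (P.map (Int.castRingHom ℂ)).Monic := hP.map _
  have hcoeff : (Finset.range (P.map (Int.castRingHom ℂ)).natDegree).sup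
      (‖(P.map (Int.castRingHom ℂ)).coeff ·‖₊) ≤ (intPolyHeight P).toNNReal := by
    refine Finset.sup_le fun k _ => ?_
    rw [← NNReal.coe_le_coe, coe_nnnorm, coeff_map, eq_intCast, Complex.norm_intCast]
    exact (abs_coeff_le_intPolyHeight P k).trans (Real.le_coe_toNNReal _)
  have hz' := ((mem_roots hP'.ne_zero).mp hz).norm_lt_cauchyBound hP'.ne_zero
  rw [cauchyBound, hP'.leadingCoeff, nnnorm_one, div_one] at hz'
  have hH := NNReal.coe_le_coe.mpr hcoeff
  rw [Real.coe_toNNReal _ ((abs_nonneg _).trans (abs_coeff_le_intPolyHeight P 0))] at hH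
  have hz'' := NNReal.coe_lt_coe.mpr hz'
  push_cast at hz''
  linarith

theorem prod_map_norm_sub_conjRoots {P : ℤ[X]} (hP : P.Monic) (x : ℝ) :
    ((conjRoots P).map fun z => ‖(x : ℂ) - z‖).prod = |aeval x P| := by
  have h := (IsAlgClosed.splits (P.map (algebraMap ℤ ℂ))).aeval_eq_prod_aroots_of_monic hP (x : ℂ)
  have h' := congrArg norm h
  rw [← Complex.coe_algebraMap, aeval_algebraMap_apply, Complex.coe_algebraMap, Complex.norm_real,
    Real.norm_eq_abs, ← normHom_apply, map_multiset_prod, Multiset.map_map] at h'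
  exact h'.symm

theorem abs_aeval_le_prod_mul_of_conjRoots_eq_add {P : ℤ[X]} (hP : P.Monic) {S : Multiset ℂ}
    {w : ℂ} (hw : conjRoots P = S + {w}) (x : ℝ) :
    |aeval x P| ≤ (S.map fun z => ‖(x : ℂ) - z‖).prod * ((|x| + 2) * intPolyHeight P) := by
  have hH : 1 ≤ intPolyHeight P := one_le_intPolyHeight hP.ne_zero
  have hw_le := norm_le_intPolyHeight_add_one_of_mem_conjRoots hP (hw ▸ by simp : w ∈ conjRoots P)
  rw [← prod_map_norm_sub_conjRoots hP, hw, Multiset.map_add, Multiset.prod_add,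
    Multiset.map_singleton, Multiset.prod_singleton]
  gcongr
  · exact Multiset.prod_map_nonneg fun _ _ => norm_nonneg _
  calc ‖(x : ℂ) - w‖ ≤ |x| + ‖w‖ := by simpa using norm_sub_le (x : ℂ) w
    _ ≤ (|x| + 2) * intPolyHeight P := by nlinarith [abs_nonneg x]

/-- Optimality for quadratic irrational `ξ`: there is `c > 0` such that for every algebraic
integer `α` of degree `n+1` (encoded by its monic irreducible polynomial `P ∈ ℤ[T]`) none of
whose conjugates equals `ξ`, and any choice of `n` conjugates, some chosen conjugate `z`
satisfies `|ξ - z| ≥ c H(α)^(-2/n)`. -/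
theorem quadratic_irrational_optimality
    (ξ : ℝ) (hξ : Irrational ξ)
    (hquad : ∃ p : Polynomial ℚ, p.degree = 2 ∧ Polynomial.aeval ξ p = 0)
    (n : ℕ) (hn : 0 < n) :
    ∃ c : ℝ, 0 < c ∧
      ∀ P : Polynomial ℤ, P.Monic → Irreducible P → P.natDegree = n + 1 →
        (∀ z ∈ conjRoots P, z ≠ (ξ : ℂ)) →
        ∀ S : Multiset ℂ, S ≤ conjRoots P → Multiset.card S = n →
          ∃ z ∈ S, c * intPolyHeight P ^ (-2 / (n : ℝ)) ≤ ‖(ξ : ℂ) - z‖ := by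
  obtain ⟨p, hp, hpξ⟩ := hquad
  obtain ⟨f, hf, hfξ⟩ := exists_int_natDegree_eq_aeval_eq_zero hpξ
  rw [natDegree_eq_of_degree_eq_some hp] at hf
  obtain ⟨κ, hκ, hlow⟩ := hξ.exists_pos_le_intPolyHeight_mul_abs_aeval_of_quadratic hf hfξ (n + 1)
  refine ⟨(κ / (|ξ| + 2)) ^ (n : ℝ)⁻¹, by positivity, ?_⟩
  intro P hP _ hdeg hξP S hS hcard
  obtain ⟨w, hw⟩ := Multiset.exists_eq_add_singleton_of_le hS (by rw [card_conjRoots, hdeg, hcard])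
  have hpos : ∀ z ∈ conjRoots P, 0 < ‖(ξ : ℂ) - z‖ :=
    fun z hz => norm_pos_iff.mpr (sub_ne_zero.mpr (hξP z hz).symm)
  have hPξ : aeval ξ P ≠ 0 := abs_pos.mp <|
    prod_map_norm_sub_conjRoots hP ξ ▸ Multiset.prod_pos (by simpa using hpos)
  refine Multiset.exists_le_of_pow_card_le_prod_map (by rintro rfl; simp at hcard; omega)
    (fun z hz => hpos z (Multiset.mem_of_le hS hz)) ?_
  have hH : 0 < intPolyHeight P := one_pos.trans_le (one_le_intPolyHeight hP.ne_zero)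
  rw [hcard, Real.rpow_inv_mul_rpow_neg_two_div_pow (by positivity) hH.le hn.ne', div_div,
    div_le_iff₀ (by positivity)]
  calc κ ≤ intPolyHeight P * |aeval ξ P| := hlow P hdeg.le hPξ
    _ ≤ intPolyHeight P *
          ((S.map fun z => ‖(ξ : ℂ) - z‖).prod * ((|ξ| + 2) * intPolyHeight P)) := by
      gcongr
      exact abs_aeval_le_prod_mul_of_conjRoots_eq_add hP hw ξ
    _ = _ := by ring
end

section
/- Let ξ be an irrational real number, let n be a positive integer, and let q ≥ 1 be the denominator of a convergent of the continued fraction expansion of ξ. Then every nonzero polynomial P with integer coefficients of degree at most n satisfies max_{0 ≤ k ≤ n} |P^{[k]}(ξ)| · q^{n−2k} ≥ (2^{n²} (n+1)!)^{-1}. -/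
open Polynomial

/-!
Let `p / q` be the convergent, so that `|q ξ - p| ≤ 1 / q`. By induction on `n`, the weighted
sum `∑ₖ |P^{[k]}(ξ)| q^(n-2k)` is at least `1 / n!`, so its largest term is at least
`1 / (n+1)!`. If `P(p/q) ≠ 0`, then `q^n P(p/q)` is a nonzero integer, while the Taylor
expansion of `P` at `ξ` bounds it by the weighted sum. If `P(p/q) = 0`, Gauss's lemma gives
`P = (qX - p) Q` with `Q ∈ ℤ[X]` of degree `< n`, and the relation
`P^{[k+1]}(ξ) = q Q^{[k]}(ξ) + (qξ - p) Q^{[k+1]}(ξ)` bounds the weighted sum of `Q` by `n`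
times that of `P`.
-/

open Finset Nat

namespace GenContFract

theorem exists_int_of_contsAux (ξ : ℝ) (i : ℕ) :
    ∃ a b : ℤ,
      ((GenContFract.of ξ).contsAux i).a = a ∧ ((GenContFract.of ξ).contsAux i).b = b := by
  induction i using Nat.strong_induction_on with
  | _ i ih =>
    match i with
    | 0 => exact ⟨1, 0, by simp, by simp⟩
    | 1 => exact ⟨⌊ξ⌋, 1, by simp, by simp⟩
    | m + 2 =>
      obtain ⟨a, b, ha, hb⟩ := ih m (by omega)
      obtain ⟨a', b', ha', hb'⟩ := ih (m + 1) (by omega)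
      cases hs : (GenContFract.of ξ).s.get? m with
      | none => exact ⟨a', b', by simp [contsAux, hs, ha'], by simp [contsAux, hs, hb']⟩
      | some gp =>
        have hgp : gp.a = 1 := of_partNum_eq_one (partNum_eq_s_a hs)
        obtain ⟨z, hz⟩ := exists_int_eq_of_partDen (partDen_eq_s_b hs)
        refine ⟨z * a' + a, z * b' + b, ?_, ?_⟩ <;>
          simp [contsAux, hs, nextConts, nextNum, nextDen, hgp, hz, ha, hb, ha', hb']

theorem exists_int_nums_dens (ξ : ℝ) (i : ℕ) :
    ∃ a b : ℤ, (GenContFract.of ξ).nums i = a ∧ (GenContFract.of ξ).dens i = b :=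
  exists_int_of_contsAux ξ (i + 1)

end GenContFract

theorem IsConvergentDenom.exists_isCoprime_abs_sub_div_le {ξ : ℝ} (hξ : Irrational ξ) {q : ℕ}
    (hq : IsConvergentDenom ξ q) :
    ∃ p : ℤ, IsCoprime p q ∧ |ξ - p / q| ≤ 1 / (q : ℝ) ^ 2 := by
  obtain ⟨hq1, i, hden⟩ := hq
  have hnt : ¬(GenContFract.of ξ).TerminatedAt i := fun h => by
    obtain ⟨r, hr⟩ := (GenContFract.terminates_iff_rat ξ).1 ⟨i, h⟩
    exact hξ ⟨r, hr.symm⟩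
  obtain ⟨a, b, ha, hb⟩ := GenContFract.exists_int_nums_dens ξ i
  obtain ⟨a', b', ha', hb'⟩ := GenContFract.exists_int_nums_dens ξ (i + 1)
  have hbq : (b : ℝ) = q := hb.symm.trans hden
  have hdet : (GenContFract.of ξ).nums i * (GenContFract.of ξ).dens (i + 1)
      - (GenContFract.of ξ).dens i * (GenContFract.of ξ).nums (i + 1) = (-1) ^ (i + 1) :=
    SimpContFract.determinant (s := ⟨_, GenContFract.of_isSimpContFract ξ⟩) hnt
  rw [ha, hb, ha', hb'] at hdet
  have hdetZ : a * b' - b * a' = (-1) ^ (i + 1) := by exact_mod_cast hdet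
  refine ⟨a, ?_, ?_⟩
  · rw [show (q : ℤ) = b by exact_mod_cast hbq.symm]
    have hsq : ((-1 : ℤ) ^ (i + 1)) ^ 2 = 1 := by
      rw [← pow_mul, mul_comm, pow_mul, neg_one_sq, one_pow]
    exact ⟨(-1) ^ (i + 1) * b', -((-1) ^ (i + 1) * a'),
      by linear_combination (-1 : ℤ) ^ (i + 1) * hdetZ + hsq⟩
  · have happrox := GenContFract.abs_sub_convs_le hnt
    rw [GenContFract.conv_eq_num_div_den, ha, hb, hbq] at happrox
    have hmono : (q : ℝ) ≤ (GenContFract.of ξ).dens (i + 1) :=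
      hden ▸ GenContFract.of_den_mono
    have hq0 : (0 : ℝ) < q := by exact_mod_cast hq1
    refine happrox.trans (one_div_le_one_div_of_le (by positivity) ?_)
    rw [sq]
    exact mul_le_mul_of_nonneg_left hmono hq0.le

theorem Polynomial.C_mul_X_sub_C_dvd_of_eval_div_eq_zero {P : ℤ[X]} {p q : ℤ}
    (hpq : IsCoprime p q) (hq : q ≠ 0)
    (h : (P.map (Int.castRingHom ℝ)).eval ((p : ℝ) / q) = 0) :
    C q * X - C p ∣ P := by
  have hprim : (C q * X - C p).IsPrimitive := by
    intro r hr
    have h1 := (C_dvd_iff_dvd_coeff r _).1 hr 1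
    have h0 := (C_dvd_iff_dvd_coeff r _).1 hr 0
    simp only [coeff_sub, coeff_C_mul_X, coeff_C] at h0 h1
    exact hpq.isUnit_of_dvd' (by simpa using h0) (by simpa using h1)
  have hq' : (q : ℚ) ≠ 0 := Int.cast_ne_zero.2 hq
  have hroot : (P.map (algebraMap ℤ ℚ)).IsRoot (p / q) := by
    have : algebraMap ℚ ℝ (aeval ((p : ℚ) / q) P) = 0 := by
      rw [← aeval_algebraMap_apply, ← h, ← algebraMap_int_eq, eval_map_algebraMap]
      push_cast
      rfl
    rwa [map_eq_zero, ← eval_map_algebraMap] at this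
  have hmap : (C q * X - C p).map (algebraMap ℤ ℚ) = C (q : ℚ) * (X - C ((p : ℚ) / q)) := by
    rw [mul_sub, ← C_mul, mul_div_cancel₀ _ hq']
    simp
  apply hprim.dvd_of_fraction_map_dvd_fraction_map (K := ℚ)
  rw [hmap, (isUnit_C.2 hq'.isUnit).mul_left_dvd]
  exact dvd_iff_isRoot.2 hroot

theorem coeff_succ_C_mul_X_add_C_mul {R : Type*} [Semiring R] (q u : R) (S : R[X]) (j : ℕ) :
    ((C q * X + C u) * S).coeff (j + 1) = q * S.coeff j + u * S.coeff (j + 1) := by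
  rw [add_mul, coeff_add, mul_assoc, coeff_C_mul, coeff_X_mul, coeff_C_mul]

theorem abs_coeff_mul_zpow_le_sum_Ioc {K : Type*} [Field K] [LinearOrder K]
    [IsStrictOrderedRing K]
    {q u : K} (hq : 0 < q) (hu : |u| * q ≤ 1) {S : K[X]} {n : ℕ} (hS : S.natDegree < n)
    {j : ℕ} (hj : j ≤ n) :
    |S.coeff j| * q ^ ((n : ℤ) - 1 - 2 * j) ≤
      ∑ k ∈ Ioc j n, |((C q * X + C u) * S).coeff k| * q ^ ((n : ℤ) - 2 * k) := by
  induction hj using Nat.decreasingInduction with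
  | self => simp [coeff_eq_zero_of_natDegree_lt hS]
  | of_succ j hj ih =>
    rw [← insert_Ioc_add_one_left_eq_Ioc hj, sum_insert left_notMem_Ioc,
      coeff_succ_C_mul_X_add_C_mul]
    set T := q * S.coeff j + u * S.coeff (j + 1)
    set e := q ^ ((n : ℤ) - 1 - 2 * ↑(j + 1))
    have he : 0 ≤ e := by positivity
    have h1 : q ^ ((n : ℤ) - 2 * ↑(j + 1)) = q * e := by
      rw [← zpow_one_add₀ hq.ne']; congr 1; ring
    have h2 : q ^ ((n : ℤ) - 1 - 2 * j) = q * (q * e) := by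
      rw [← h1, ← zpow_one_add₀ hq.ne']; congr 1; push_cast; ring
    have hqS : q * |S.coeff j| ≤ |T| + |u| * |S.coeff (j + 1)| := by
      rw [← abs_of_pos hq, ← abs_mul, ← abs_mul,
        show q * S.coeff j = T - u * S.coeff (j + 1) by ring]
      exact abs_sub _ _
    rw [h1, h2]
    nlinarith [mul_le_mul_of_nonneg_right hqS (mul_nonneg hq.le he),
      mul_le_mul_of_nonneg_right hu (mul_nonneg (abs_nonneg (S.coeff (j + 1))) he)]

noncomputable def taylorWeightSum (ξ q : ℝ) (n : ℕ) (P : ℝ[X]) : ℝ :=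
  ∑ k ∈ range (n + 1), |divDeriv ξ P k| * q ^ ((n : ℤ) - 2 * k)

theorem pow_mul_abs_eval_le_taylorWeightSum {ξ q x : ℝ} {n : ℕ} {P : ℝ[X]}
    (hP : P.natDegree ≤ n) (hq : 0 < q) (hx : |x - ξ| ≤ 1 / q ^ 2) :
    q ^ n * |P.eval x| ≤ taylorWeightSum ξ q n P := by
  have hsum : P.eval x = ∑ k ∈ range (n + 1), divDeriv ξ P k * (x - ξ) ^ k := by
    rw [← taylor_eval_sub ξ, eval_eq_sum_range' (n := n + 1) (by rw [natDegree_taylor]; omega)]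
    rfl
  rw [hsum, taylorWeightSum]
  refine (mul_le_mul_of_nonneg_left (abs_sum_le_sum_abs _ _) (by positivity)).trans ?_
  rw [mul_sum]
  refine sum_le_sum fun k _ => ?_
  have hpow : q ^ ((n : ℤ) - 2 * k) = q ^ n * (1 / q ^ 2) ^ k := by
    rw [zpow_sub₀ hq.ne', zpow_natCast, div_pow, one_pow, ← pow_mul, mul_one_div]
    norm_cast
  calc q ^ n * |divDeriv ξ P k * (x - ξ) ^ k| = |divDeriv ξ P k| * (q ^ n * |x - ξ| ^ k) := by
        rw [abs_mul, abs_pow]; ring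
    _ ≤ |divDeriv ξ P k| * q ^ ((n : ℤ) - 2 * k) := by rw [hpow]; gcongr

theorem taylor_C_mul_X_sub_C {R : Type*} [CommRing R] (ξ q p : R) :
    taylor ξ (C q * X - C p) = C q * X + C (q * ξ - p) := by
  rw [map_sub, taylor_mul, taylor_C, taylor_X, taylor_C, C_sub, C_mul]
  ring

theorem taylorWeightSum_le_mul_taylorWeightSum_C_mul_X_sub_C_mul {ξ q p : ℝ} (hq : 0 < q)
    (hp : |q * ξ - p| * q ≤ 1) {Q : ℝ[X]} {n : ℕ} (hQ : Q.natDegree ≤ n) :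
    taylorWeightSum ξ q n Q ≤ (n + 1) * taylorWeightSum ξ q (n + 1) ((C q * X - C p) * Q) := by
  set W := taylorWeightSum ξ q (n + 1) ((C q * X - C p) * Q)
  calc taylorWeightSum ξ q n Q ≤ ∑ _j ∈ range (n + 1), W := by
        refine sum_le_sum fun j hj => ?_
        have hj : j ≤ n + 1 := by rw [mem_range] at hj; omega
        have key := abs_coeff_mul_zpow_le_sum_Ioc hq hp (S := taylor ξ Q)
          (by rw [natDegree_taylor]; omega) hj
        rw [← taylor_C_mul_X_sub_C, ← taylor_mul] at key
        push_cast at key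
        rw [show (n : ℤ) + 1 - 1 - 2 * j = n - 2 * j by ring] at key
        refine key.trans (sum_le_sum_of_subset_of_nonneg ?_ fun k _ _ => by positivity)
        intro k hk
        simp only [mem_Ioc, mem_range] at hk ⊢
        omega
    _ = (n + 1) * W := by simp

theorem inv_factorial_le_taylorWeightSum {ξ : ℝ} (hξ : Irrational ξ) {q : ℕ}
    (hq : IsConvergentDenom ξ q) (n : ℕ) {P : ℤ[X]} (hP : P ≠ 0) (hdeg : P.natDegree ≤ n) :
    (n ! : ℝ)⁻¹ ≤ taylorWeightSum ξ q n (P.map (Int.castRingHom ℝ)) := by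
  obtain ⟨p, hpq, happrox⟩ := hq.exists_isCoprime_abs_sub_div_le hξ
  have hq0 : (0 : ℝ) < q := by exact_mod_cast hq.1
  induction n using Nat.strong_induction_on generalizing P with
  | _ n ih =>
  rcases eq_or_ne ((P.map (Int.castRingHom ℝ)).eval ((p : ℝ) / q)) 0 with hroot | hroot
  · have hqZ : (q : ℤ) ≠ 0 := by exact_mod_cast hq0.ne'
    obtain ⟨Q, rfl⟩ := C_mul_X_sub_C_dvd_of_eval_div_eq_zero hpq hqZ (by simpa using hroot)
    have hQ : Q ≠ 0 := right_ne_zero_of_mul hP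
    rw [natDegree_mul (left_ne_zero_of_mul hP) hQ, natDegree_sub_C, natDegree_C_mul_X _ hqZ]
      at hdeg
    obtain ⟨m, rfl⟩ : ∃ m, n = m + 1 := ⟨n - 1, by omega⟩
    have hu : |q * ξ - p| * q ≤ 1 := by
      rw [show (q : ℝ) * ξ - p = q * (ξ - p / q) by field_simp, abs_mul, abs_of_pos hq0]
      calc (q : ℝ) * |ξ - p / q| * q ≤ q * (1 / q ^ 2) * q := by gcongr
        _ = 1 := by field_simp
    calc ((m + 1) ! : ℝ)⁻¹ = (m + 1 : ℝ)⁻¹ * (m ! : ℝ)⁻¹ := by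
          rw [Nat.factorial_succ, Nat.cast_mul, mul_inv]; push_cast; ring
      _ ≤ (m + 1 : ℝ)⁻¹ * taylorWeightSum ξ q m (Q.map (Int.castRingHom ℝ)) := by
          gcongr
          exact ih m (by omega) hQ (by omega)
      _ ≤ _ := by
          rw [inv_mul_le_iff₀ (by positivity), Polynomial.map_mul]
          simpa using taylorWeightSum_le_mul_taylorWeightSum_C_mul_X_sub_C_mul hq0 hu
            (natDegree_map_le.trans (by omega : Q.natDegree ≤ m))
  · calc (n ! : ℝ)⁻¹ ≤ 1 := inv_le_one_of_one_le₀ (by exact_mod_cast n.factorial_pos)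
      _ ≤ (q : ℝ) ^ P.natDegree * |(P.map (Int.castRingHom ℝ)).eval ((p : ℝ) / q)| := by
          simpa using one_le_pow_mul_abs_eval_div (K := ℝ) (a := p) (Int.natCast_pos.2 hq.1)
            (by simpa using hroot)
      _ ≤ (q : ℝ) ^ n * |(P.map (Int.castRingHom ℝ)).eval ((p : ℝ) / q)| := by
          gcongr
          · exact_mod_cast hq.1
      _ ≤ _ := pow_mul_abs_eval_le_taylorWeightSum (natDegree_map_le.trans hdeg) hq0
          (by rwa [abs_sub_comm])

theorem first_minimum_lower_bound_general
    (ξ : ℝ) (hξ : Irrational ξ) (n : ℕ) (q : ℕ)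
    (hq : IsConvergentDenom ξ q) (P : Polynomial ℤ) (hP : P ≠ 0) (hdeg : P.natDegree ≤ n) :
    ∃ k ≤ n, (1 : ℝ) / ((2 : ℝ) ^ (n ^ 2) * ((n + 1).factorial : ℝ)) ≤
      |divDerivZ ξ P k| * (q : ℝ) ^ ((n : ℝ) - 2 * k) := by
  have hsum := inv_factorial_le_taylorWeightSum hξ hq n hP hdeg
  obtain ⟨k, hk, hbound⟩ : ∃ k ∈ range (n + 1),
      ((n + 1)! : ℝ)⁻¹ ≤ |divDerivZ ξ P k| * (q : ℝ) ^ ((n : ℤ) - 2 * k) := by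
    refine exists_le_of_sum_le ⟨0, by simp⟩ (hsum.trans_eq' ?_)
    rw [sum_const, card_range, nsmul_eq_mul, Nat.factorial_succ, Nat.cast_mul, mul_inv,
      ← mul_assoc, mul_inv_cancel₀ (by positivity), one_mul]
  refine ⟨k, by simpa [Nat.lt_succ_iff] using hk, le_trans ?_ (hbound.trans_eq ?_)⟩
  · rw [one_div]
    gcongr
    exact le_mul_of_one_le_left (by positivity) (one_le_pow₀ one_le_two)
  · rw [← Real.rpow_intCast]
    push_cast
    rfl

/-- First-minimum lower bound: if `q ≥ 1` is the denominator of a convergent of the irrational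
number `ξ`, then every nonzero integer polynomial `P` of degree at most `n` satisfies
`max_{0 ≤ k ≤ n} |P^{[k]}(ξ)| q^(n-2k) ≥ (2^(n²) (n+1)!)⁻¹`. -/
theorem first_minimum_lower_bound
    (ξ : ℝ) (hξ : Irrational ξ) (n : ℕ) (hn : 0 < n) (q : ℕ)
    (hq : IsConvergentDenom ξ q) (P : Polynomial ℤ) (hP : P ≠ 0) (hdeg : P.natDegree ≤ n) :
    ∃ k ≤ n, (1 : ℝ) / ((2 : ℝ) ^ (n ^ 2) * ((n + 1).factorial : ℝ)) ≤
      |divDerivZ ξ P k| * (q : ℝ) ^ ((n : ℝ) - 2 * k) :=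
  first_minimum_lower_bound_general ξ hξ n q hq P hP hdeg
end

section
/- Let ξ be an irrational real number, let n be a positive integer, let q ≥ 1 be the denominator of a convergent of the continued fraction expansion of ξ, and set c₅ = (n+1)·2^{n+1}. Then there exists a monic polynomial Q ∈ ℤ[T] of degree n+1 that is irreducible over ℚ and satisfies c₅ q^{2k−n} ≤ |Q^{[k]}(ξ)| ≤ 3 c₅ q^{2k−n} for all 0 ≤ k ≤ n. -/
/-!
Let `p'/q'`, `p/q` be consecutive convergents of `ξ`, so that `qp' - pq' = ±1` and
`|qξ - p|, |q'ξ - p'| ≤ 1/q`. By unimodularity the products `Fₐ = (qT - p)ᵃ (q'T - p')ⁿ⁻ᵃ`,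
`a ≤ n`, span the polynomials of degree `≤ n` over `𝔽₂` and over `ℝ`, and
`|Fₐ^{[k]}(ξ)| ≤ C(n,k) q^(2k-n)`. Take `Q = Tⁿ⁺¹ + Σ xₐ Fₐ` with integers `xₐ` within `1` of the
real solution of `Q^{[k]}(ξ) = 2 c₅ q^(2k-n)` (`k ≤ n`), and with residues mod 2 chosen so that
`Q ≡ g` for an irreducible `g ∈ 𝔽₂[T]` of degree `n + 1`. Then `Q` is irreducible, and rounding
moves each `Q^{[k]}(ξ)` by at most `(n+1) 2ⁿ q^(2k-n) = c₅ q^(2k-n) / 2`.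
-/

open Polynomial

namespace Polynomial

section PowMulPow

variable {R : Type*} [CommRing R]

noncomputable def powMulPow (L L' : R[X]) (n : ℕ) (a : Fin (n + 1)) : R[X] :=
  L ^ (a : ℕ) * L' ^ (n - a)

lemma map_powMulPow {S : Type*} [CommRing S] (f : R →+* S) (L L' : R[X]) (n : ℕ)
    (a : Fin (n + 1)) : (powMulPow L L' n a).map f = powMulPow (L.map f) (L'.map f) n a := by
  simp only [powMulPow, Polynomial.map_mul, Polynomial.map_pow]

lemma powMulPow_comp (L L' P : R[X]) (n : ℕ) (a : Fin (n + 1)) :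
    (powMulPow L L' n a).comp P = powMulPow (L.comp P) (L'.comp P) n a := by
  simp only [powMulPow, mul_comp, pow_comp]

lemma natDegree_powMulPow_le {L L' : R[X]} (hL : L.natDegree ≤ 1) (hL' : L'.natDegree ≤ 1)
    (n : ℕ) (a : Fin (n + 1)) : (powMulPow L L' n a).natDegree ≤ n := by
  refine natDegree_mul_le.trans ?_
  have := natDegree_pow_le_of_le (a : ℕ) hL
  have := natDegree_pow_le_of_le (n - a) hL'
  omega

lemma natDegree_sum_C_mul_powMulPow_le {L L' : R[X]} (hL : L.natDegree ≤ 1)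
    (hL' : L'.natDegree ≤ 1) (n : ℕ) (c : Fin (n + 1) → R) :
    (∑ a, C (c a) * powMulPow L L' n a).natDegree ≤ n :=
  natDegree_sum_le_of_forall_le _ _ fun a _ =>
    (natDegree_C_mul_le _ _).trans (natDegree_powMulPow_le hL hL' n a)

lemma monic_X_pow_add_sum_C_mul_powMulPow [Nontrivial R] {L L' : R[X]} (hL : L.natDegree ≤ 1)
    (hL' : L'.natDegree ≤ 1) (n : ℕ) (c : Fin (n + 1) → R) :
    (X ^ (n + 1) + ∑ a, C (c a) * powMulPow L L' n a).Monic ∧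
      (X ^ (n + 1) + ∑ a, C (c a) * powMulPow L L' n a).natDegree = n + 1 := by
  have h := natDegree_sum_C_mul_powMulPow_le hL hL' n c
  refine ⟨monic_X_pow_add ?_, ?_⟩
  · exact (degree_le_of_natDegree_le h).trans_lt (by exact_mod_cast n.lt_succ_self)
  · rw [natDegree_add_eq_left_of_natDegree_lt (by rw [natDegree_X_pow]; omega), natDegree_X_pow]

lemma span_pair_pow_le_span_powMulPow (L L' : R[X]) (n : ℕ) :
    Submodule.span R {L, L'} ^ n ≤ Submodule.span R (Set.range (powMulPow L L' n)) := by
  induction n with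
  | zero =>
    rw [pow_zero, Submodule.one_eq_span]
    exact Submodule.span_mono (by simp [powMulPow])
  | succ n ih =>
    rw [pow_succ]
    refine (mul_le_mul' ih le_rfl).trans ?_
    rw [Submodule.span_mul_span]
    refine Submodule.span_mono ?_
    rintro _ ⟨_, ⟨a, rfl⟩, _, rfl | rfl, rfl⟩
    · exact ⟨a.succ, by simp only [powMulPow, Fin.val_succ, Nat.add_sub_add_right, pow_succ]; ring⟩
    · refine ⟨a.castSucc, ?_⟩
      simp only [powMulPow, Fin.val_castSucc, Nat.sub_add_comm (Nat.lt_succ_iff.1 a.2), pow_succ]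
      ring

theorem degreeLT_le_span_powMulPow {u v u' v' : R} (h : IsUnit (u * v' - v * u')) (n : ℕ) :
    degreeLT R (n + 1) ≤
      Submodule.span R (Set.range (powMulPow (C u * X + C v) (C u' * X + C v') n)) := by
  classical
  obtain ⟨e, he⟩ := h.exists_left_inv
  set M := Submodule.span R {C u * X + C v, C u' * X + C v'}
  have hC : C e * (C u * C v' - C v * C u') = 1 := by
    rw [← C_1, ← he]; simp only [map_mul, map_sub]
  have hX : X ∈ M := Submodule.mem_span_pair.2 ⟨e * v', -(e * v), by
    simp only [smul_eq_C_mul, map_mul, map_neg]; linear_combination X * hC⟩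
  have h1 : 1 ∈ M := Submodule.mem_span_pair.2 ⟨-(e * u'), e * u, by
    simp only [smul_eq_C_mul, map_mul, map_neg]; linear_combination hC⟩
  -- `Xᵏ = Xᵏ · 1ⁿ⁻ᵏ` lies in `Mⁿ`, which the products `Lᵃ L'ⁿ⁻ᵃ` span
  rw [degreeLT_eq_span_X_pow, Submodule.span_le, Finset.coe_image]
  rintro _ ⟨k, hk, rfl⟩
  refine span_pair_pow_le_span_powMulPow _ _ n ?_
  have := Submodule.mul_mem_mul (Submodule.pow_mem_pow M hX k) (Submodule.pow_mem_pow M h1 (n - k))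
  rwa [one_pow, mul_one, ← pow_add, Nat.add_sub_cancel' (by simpa [Nat.lt_succ_iff] using hk)]
    at this

theorem exists_eq_sum_powMulPow {u v u' v' : R} (h : IsUnit (u * v' - v * u')) {n : ℕ} {T : R[X]}
    (hT : T ∈ degreeLT R (n + 1)) :
    ∃ c : Fin (n + 1) → R, ∑ a, C (c a) * powMulPow (C u * X + C v) (C u' * X + C v') n a = T := by
  obtain ⟨c, hc⟩ := (Submodule.mem_span_range_iff_exists_fun R).1
    (degreeLT_le_span_powMulPow h n hT)
  exact ⟨c, by simpa only [smul_eq_C_mul] using hc⟩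

theorem exists_sum_mul_coeff_powMulPow_eq {u v u' v' : R} (h : IsUnit (u * v' - v * u')) (n : ℕ)
    (t : ℕ → R) : ∃ c : Fin (n + 1) → R, ∀ k ≤ n,
      ∑ a, c a * (powMulPow (C u * X + C v) (C u' * X + C v') n a).coeff k = t k := by
  obtain ⟨c, hc⟩ := exists_eq_sum_powMulPow h ((degreeLTEquiv R (n + 1)).symm fun i => t i).2
  refine ⟨c, fun k hk => ?_⟩
  simp_rw [← coeff_C_mul, ← finsetSum_coeff, hc]
  exact congrFun ((degreeLTEquiv R (n + 1)).apply_symm_apply _) ⟨k, Nat.lt_succ_of_le hk⟩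

lemma coeff_C_mul_X_add_C_pow (u v : R) (m k : ℕ) :
    ((C u * X + C v) ^ m).coeff k = m.choose k * u ^ k * v ^ (m - k) := by
  have hterm (i : ℕ) : (C u * X) ^ i * C v ^ (m - i) * (m.choose i : R[X]) =
      C (m.choose i * u ^ i * v ^ (m - i)) * X ^ i := by
    simp only [map_mul, map_pow, map_natCast]; ring
  simp only [add_pow, hterm, finsetSum_coeff, coeff_C_mul_X_pow, Finset.sum_ite_eq,
    Finset.mem_range]
  split_ifs with hk
  · rfl
  · simp [Nat.choose_eq_zero_of_lt (by omega : m < k)]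

end PowMulPow

section Majorant

variable {R : Type*} [CommRing R] [LinearOrder R] [IsStrictOrderedRing R]

lemma abs_coeff_mul_le {f g F G : R[X]} (hf : ∀ i, |f.coeff i| ≤ F.coeff i)
    (hg : ∀ i, |g.coeff i| ≤ G.coeff i) (k : ℕ) : |(f * g).coeff k| ≤ (F * G).coeff k := by
  simp only [coeff_mul]
  refine (Finset.abs_sum_le_sum_abs _ _).trans (Finset.sum_le_sum fun x _ => ?_)
  rw [abs_mul]
  exact mul_le_mul (hf _) (hg _) (abs_nonneg _) ((abs_nonneg _).trans (hf _))

lemma abs_coeff_pow_le {f F : R[X]} (hf : ∀ i, |f.coeff i| ≤ F.coeff i) (m k : ℕ) :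
    |(f ^ m).coeff k| ≤ (F ^ m).coeff k := by
  induction m generalizing k with
  | zero => simp only [pow_zero, coeff_one]; split_ifs <;> simp
  | succ m ih => simpa only [pow_succ] using abs_coeff_mul_le ih hf k

lemma abs_coeff_linear_le {u v U V : R} (hu : |u| ≤ U) (hv : |v| ≤ V) (i : ℕ) :
    |(C u * X + C v).coeff i| ≤ (C U * X + C V).coeff i := by
  rcases i with _ | _ | i <;> simp [coeff_C, hu, hv]

lemma abs_coeff_powMulPow_le {u v u' v' U V : R} (hu : |u| ≤ U) (hv : |v| ≤ V) (hu' : |u'| ≤ U)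
    (hv' : |v'| ≤ V) (n : ℕ) (a : Fin (n + 1)) (k : ℕ) :
    |(powMulPow (C u * X + C v) (C u' * X + C v') n a).coeff k| ≤
      n.choose k * U ^ k * V ^ (n - k) := by
  have h := abs_coeff_mul_le (abs_coeff_pow_le (abs_coeff_linear_le hu hv) a)
    (abs_coeff_pow_le (abs_coeff_linear_le hu' hv') (n - a)) k
  rwa [pow_mul_pow_sub _ (Nat.lt_succ_iff.1 a.2), coeff_C_mul_X_add_C_pow] at h

end Majorant

end Polynomial

lemma ZMod.exists_monic_irreducible_natDegree_eq (p : ℕ) [Fact p.Prime] {d : ℕ} (hd : d ≠ 0) :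
    ∃ f : (ZMod p)[X], f.Monic ∧ Irreducible f ∧ f.natDegree = d := by
  obtain ⟨α, hα⟩ := Field.exists_primitive_element_of_finite_top (ZMod p) (GaloisField p d)
  have hint : IsIntegral (ZMod p) α := .of_finite _ _
  refine ⟨minpoly (ZMod p) α, minpoly.monic hint, minpoly.irreducible hint, ?_⟩
  rw [← IntermediateField.adjoin.finrank hint, hα, IntermediateField.finrank_top',
    GaloisField.finrank p hd]

lemma ZMod.exists_intCast_eq_abs_sub_le {m : ℕ} [NeZero m] (r : ZMod m) (y : ℝ) :
    ∃ x : ℤ, (x : ZMod m) = r ∧ |x - y| ≤ m / 2 := by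
  set z := (y - r.val) / m
  refine ⟨r.val + m * round z, by simp, ?_⟩
  have hm : (0 : ℝ) < m := by exact_mod_cast NeZero.pos m
  have h : ((r.val + m * round z : ℤ) : ℝ) - y = m * (round z - z) := by
    simp only [z]; push_cast; field_simp; ring
  rw [h, abs_mul, abs_of_pos hm, abs_sub_comm]
  calc (m : ℝ) * |z - round z| ≤ m * (1 / 2) := by gcongr; exact abs_sub_round z
    _ = m / 2 := by ring

theorem exists_irreducible_X_pow_add_sum_powMulPow_near {u v u' v' : ℤ}
    (h : IsUnit (u * v' - v * u')) (n : ℕ) (y : Fin (n + 1) → ℝ) :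
    ∃ x : Fin (n + 1) → ℤ, (∀ a, |(x a : ℝ) - y a| ≤ 1) ∧ Irreducible
      (X ^ (n + 1) + ∑ a, C (x a) * powMulPow (C u * X + C v) (C u' * X + C v') n a) := by
  have : Fact (Nat.Prime 2) := ⟨Nat.prime_two⟩
  obtain ⟨f, hf, hirr, hdeg⟩ :=
    ZMod.exists_monic_irreducible_natDegree_eq 2 (Nat.succ_ne_zero n : n + 1 ≠ 0)
  have hT : f - X ^ (n + 1) ∈ degreeLT (ZMod 2) (n + 1) := mem_degreeLT.2 <|
    (degree_sub_lt_right (by rw [degree_eq_natDegree hf.ne_zero, hdeg, degree_X_pow])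
      (pow_ne_zero _ X_ne_zero) (by rw [hf.leadingCoeff, leadingCoeff_X_pow])).trans_eq
      (degree_X_pow _)
  have h2 : IsUnit ((u : ZMod 2) * v' - v * u') := by
    simpa using h.map (Int.castRingHom (ZMod 2))
  obtain ⟨c, hc⟩ := exists_eq_sum_powMulPow h2 hT
  choose x hx using fun a => ZMod.exists_intCast_eq_abs_sub_le (c a) (y a)
  refine ⟨x, fun a => by simpa using (hx a).2, ?_⟩
  refine Monic.irreducible_of_irreducible_map (Int.castRingHom (ZMod 2)) _ ?_ ?_
  · exact (monic_X_pow_add_sum_C_mul_powMulPow natDegree_linear_le natDegree_linear_le n x).1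
  · simp only [Polynomial.map_add, Polynomial.map_pow, map_X, Polynomial.map_sum,
      Polynomial.map_mul, map_C, map_powMulPow, Int.coe_castRingHom, fun a => (hx a).1, hc,
      add_sub_cancel, hirr]

lemma divDerivZ_X_pow_add_sum_powMulPow (ξ : ℝ) (n : ℕ) (u v u' v' : ℤ)
    (x : Fin (n + 1) → ℤ) (k : ℕ) :
    divDerivZ ξ (X ^ (n + 1) + ∑ a, C (x a) * powMulPow (C u * X + C v) (C u' * X + C v') n a) k =
      ((X + C ξ) ^ (n + 1)).coeff k + ∑ a, (x a : ℝ) * (powMulPow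
        (C (u : ℝ) * X + C (u * ξ + v)) (C (u' : ℝ) * X + C (u' * ξ + v')) n a).coeff k := by
  have hlin (a b : ℝ) : C a * (X + C ξ) + C b = C a * X + C (a * ξ + b) := by
    simp only [map_add, map_mul]; ring
  rw [divDerivZ, divDeriv, taylor_apply]
  simp only [Polynomial.map_add, Polynomial.map_pow, map_X, Polynomial.map_sum,
    Polynomial.map_mul, map_C, map_powMulPow, add_comp, pow_comp, X_comp, sum_comp, mul_comp,
    C_comp, powMulPow_comp, hlin, coeff_add, finsetSum_coeff, coeff_C_mul, Int.coe_castRingHom]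

theorem exists_irreducible_monic_abs_divDerivZ_sub_le (ξ : ℝ) (n : ℕ) {u v u' v' : ℤ}
    (h : IsUnit (u * v' - v * u')) {U V : ℝ} (hu : |(u : ℝ)| ≤ U) (hu' : |(u' : ℝ)| ≤ U)
    (hv : |u * ξ + v| ≤ V) (hv' : |u' * ξ + v'| ≤ V) (t : ℕ → ℝ) :
    ∃ Q : ℤ[X], Q.Monic ∧ Q.natDegree = n + 1 ∧ Irreducible (Q.map (Int.castRingHom ℚ)) ∧
      ∀ k ≤ n, |divDerivZ ξ Q k - t k| ≤ (n + 1) * 2 ^ n * (U ^ k * V ^ (n - k)) := by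
  have hR : IsUnit ((u : ℝ) * (u' * ξ + v') - (u * ξ + v) * u') := by
    have h := h.map (Int.castRingHom ℝ)
    simp only [map_sub, map_mul, eq_intCast] at h
    convert h using 1; ring
  obtain ⟨y, hy⟩ :=
    exists_sum_mul_coeff_powMulPow_eq hR n fun k => t k - ((X + C ξ) ^ (n + 1)).coeff k
  obtain ⟨x, hxy, hirr⟩ := exists_irreducible_X_pow_add_sum_powMulPow_near h n y
  obtain ⟨hmonic, hdeg⟩ :=
    monic_X_pow_add_sum_C_mul_powMulPow natDegree_linear_le natDegree_linear_le n x
  refine ⟨_, hmonic, hdeg,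
    (IsPrimitive.Int.irreducible_iff_irreducible_map_cast hmonic.isPrimitive).1 hirr,
    fun k hk => ?_⟩
  rw [divDerivZ_X_pow_add_sum_powMulPow, ← eq_sub_iff_add_eq'.1 (hy k hk),
    add_sub_add_left_eq_sub, ← Finset.sum_sub_distrib]
  set F := powMulPow (C (u : ℝ) * X + C (u * ξ + v)) (C (u' : ℝ) * X + C (u' * ξ + v')) n
  have hW : 0 ≤ U ^ k * V ^ (n - k) :=
    mul_nonneg (pow_nonneg ((abs_nonneg _).trans hu) _) (pow_nonneg ((abs_nonneg _).trans hv) _)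
  have hFk (a : Fin (n + 1)) : |(F a).coeff k| ≤ 2 ^ n * (U ^ k * V ^ (n - k)) :=
    (abs_coeff_powMulPow_le hu hv hu' hv' n a k).trans <| by
      rw [mul_assoc]
      gcongr
      exact_mod_cast n.choose_le_two_pow k
  simp only [← sub_mul]
  calc |∑ a, ((x a : ℝ) - y a) * (F a).coeff k|
      ≤ ∑ a, |(x a : ℝ) - y a| * |(F a).coeff k| := by
        simpa only [abs_mul] using
          Finset.abs_sum_le_sum_abs (fun a => ((x a : ℝ) - y a) * (F a).coeff k) Finset.univ
    _ ≤ ∑ _a : Fin (n + 1), 1 * (2 ^ n * (U ^ k * V ^ (n - k))) :=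
        Finset.sum_le_sum fun a _ => mul_le_mul (hxy a) (hFk a) (abs_nonneg _) zero_le_one
    _ = (n + 1) * 2 ^ n * (U ^ k * V ^ (n - k)) := by
        simp only [one_mul, Finset.sum_const, Finset.card_univ, Fintype.card_fin, nsmul_eq_mul,
          Nat.cast_add, Nat.cast_one]
        ring

namespace GenContFract

variable {K : Type*} [Field K] [LinearOrder K] [FloorRing K]

lemma exists_int_eq_contsAux (v : K) (m : ℕ) :
    ∃ a b : ℤ, (GenContFract.of v).contsAux m = ⟨a, b⟩ := by
  induction m using Nat.strong_induction_on with
  | _ m ih =>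
    match m with
    | 0 => exact ⟨1, 0, by simp [zeroth_contAux_eq_one_zero]⟩
    | 1 => exact ⟨⌊v⌋, 1, by simp [first_contAux_eq_h_one, of_h_eq_floor]⟩
    | m + 2 =>
      obtain ⟨a₁, b₁, h₁⟩ := ih (m + 1) (by omega)
      cases hs : (GenContFract.of v).s.get? m with
      | none => exact ⟨a₁, b₁, (contsAux_stable_step_of_terminated hs).trans h₁⟩
      | some gp =>
        obtain ⟨a₀, b₀, h₀⟩ := ih m (by omega)
        obtain ⟨hone, z, hz⟩ := of_partNum_eq_one_and_exists_int_partDen_eq hs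
        refine ⟨z * a₁ + a₀, z * b₁ + b₀, ?_⟩
        rw [contsAux_recurrence hs h₀ h₁, hone, hz]
        simp only [Int.cast_add, Int.cast_mul, one_mul]

lemma exists_int_eq_num_den (v : K) (m : ℕ) :
    ∃ a b : ℤ, (GenContFract.of v).nums m = a ∧ (GenContFract.of v).dens m = b := by
  obtain ⟨a, b, h⟩ := exists_int_eq_contsAux v (m + 1)
  exact ⟨a, b, by rw [num_eq_conts_a, nth_cont_eq_succ_nth_contAux, h],
    by rw [den_eq_conts_b, nth_cont_eq_succ_nth_contAux, h]⟩

lemma one_le_of_den [IsStrictOrderedRing K] (v : K) (m : ℕ) : 1 ≤ (GenContFract.of v).dens m := by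
  induction m with
  | zero => rw [zeroth_den_eq_one]
  | succ m ih => exact ih.trans of_den_mono

lemma abs_den_mul_sub_num_le [IsStrictOrderedRing K] {v : K} {m : ℕ}
    (h : ¬(GenContFract.of v).TerminatedAt m) :
    |(GenContFract.of v).dens m * v - (GenContFract.of v).nums m| ≤
      1 / (GenContFract.of v).dens (m + 1) := by
  have hd : 0 < (GenContFract.of v).dens m := one_pos.trans_le (one_le_of_den v m)
  calc |(GenContFract.of v).dens m * v - (GenContFract.of v).nums m|
      = |(GenContFract.of v).dens m * (v - (GenContFract.of v).convs m)| := by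
        rw [conv_eq_num_div_den, mul_sub, mul_div_cancel₀ _ hd.ne']
    _ = (GenContFract.of v).dens m * |v - (GenContFract.of v).convs m| := by
        rw [abs_mul, abs_of_pos hd]
    _ ≤ (GenContFract.of v).dens m *
        (1 / ((GenContFract.of v).dens m * (GenContFract.of v).dens (m + 1))) := by
        gcongr
        exact abs_sub_convs_le h
    _ = 1 / (GenContFract.of v).dens (m + 1) := by field_simp

end GenContFract

open GenContFract in
theorem IsConvergentDenom.exists_unimodular_approximations {ξ : ℝ} {q : ℕ}
    (hq : IsConvergentDenom ξ q) (hξ : Irrational ξ) :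
    ∃ p p' q' : ℤ, 0 ≤ q' ∧ q' ≤ q ∧ IsUnit (p * q' - q * p') ∧
      |q * ξ - p| ≤ 1 / q ∧ |q' * ξ - p'| ≤ 1 / q := by
  obtain ⟨hq1, i, hi⟩ := hq
  have hnt (m : ℕ) : ¬(GenContFract.of ξ).TerminatedAt m := fun hm => by
    obtain ⟨r, hr⟩ := (terminates_iff_rat ξ).1 ⟨m, hm⟩
    exact hξ ⟨r, hr.symm⟩
  cases i with
  | zero =>
    have hq : q = 1 := by exact_mod_cast hi.symm.trans zeroth_den_eq_one
    subst hq
    -- `p'/q' = 1/0` plays the role of the convergent preceding `⌊ξ⌋/1`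
    refine ⟨⌊ξ⌋, 1, 0, le_rfl, zero_le_one, by simp, ?_, by simp⟩
    rw [abs_le]
    constructor <;> push_cast <;> linarith [Int.floor_le ξ, Int.lt_floor_add_one ξ]
  | succ j =>
    obtain ⟨p', q', hp', hq'⟩ := exists_int_eq_num_den ξ j
    obtain ⟨p, -, hp, -⟩ := exists_int_eq_num_den ξ (j + 1)
    have hdet : IsUnit (p * q' - q * p') := by
      have h : (GenContFract.of ξ).nums j * (GenContFract.of ξ).dens (j + 1) -
          (GenContFract.of ξ).dens j * (GenContFract.of ξ).nums (j + 1) = (-1) ^ (j + 1) :=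
        SimpContFract.determinant (s := SimpContFract.of ξ) (hnt j)
      rw [hp', hq', hp, hi] at h
      have h : p' * q - q' * p = (-1) ^ (j + 1) := by exact_mod_cast h
      rw [show p * q' - q * p' = -(p' * q - q' * p) by ring, h]
      exact (isUnit_neg_one.pow _).neg
    have hden_mono : (q : ℝ) ≤ (GenContFract.of ξ).dens (j + 2) := hi ▸ of_den_mono
    refine ⟨p, p', q', ?_, ?_, hdet, ?_, ?_⟩
    · exact_mod_cast hq' ▸ zero_le_of_den
    · have h := of_den_mono (v := ξ) (n := j)
      rw [hq', hi] at h
      exact_mod_cast h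
    · calc |q * ξ - p| ≤ 1 / (GenContFract.of ξ).dens (j + 2) := by
            simpa only [hi, hp] using abs_den_mul_sub_num_le (hnt (j + 1))
        _ ≤ 1 / q := one_div_le_one_div_of_le (Nat.cast_pos.2 hq1) hden_mono
    · simpa only [hp', hq', hi] using abs_den_mul_sub_num_le (hnt j)

theorem exists_irreducible_monic_poly_controlled_general
    (ξ : ℝ) (hξ : Irrational ξ) (n : ℕ) (q : ℕ)
    (hq : IsConvergentDenom ξ q) :
    ∃ Q : Polynomial ℤ, Q.Monic ∧ Q.natDegree = n + 1 ∧
      Irreducible (Q.map (Int.castRingHom ℚ)) ∧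
      ∀ k ≤ n,
        ((n : ℝ) + 1) * 2 ^ (n + 1) * (q : ℝ) ^ (2 * (k : ℝ) - n) ≤ |divDerivZ ξ Q k| ∧
        |divDerivZ ξ Q k| ≤ 3 * (((n : ℝ) + 1) * 2 ^ (n + 1)) * (q : ℝ) ^ (2 * (k : ℝ) - n) := by
  obtain ⟨p, p', q', hq'0, hq'q, hdet, hθ, hθ'⟩ := hq.exists_unimodular_approximations hξ
  have hq0 : (0 : ℝ) < q := by exact_mod_cast hq.1
  set c₅ : ℝ := (n + 1) * 2 ^ (n + 1)
  set w : ℕ → ℝ := fun k => (q : ℝ) ^ k * (1 / q) ^ (n - k)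
  obtain ⟨Q, hmonic, hdeg, hirr, hQ⟩ := exists_irreducible_monic_abs_divDerivZ_sub_le ξ n
    (u := q) (v := -p) (u' := q') (v' := -p') (by convert hdet using 1; ring)
    (U := q) (V := 1 / q) (by simp)
    (abs_le.2 ⟨by linarith [(Int.cast_nonneg hq'0 : (0 : ℝ) ≤ q')], by exact_mod_cast hq'q⟩)
    (by simpa [← sub_eq_add_neg] using hθ) (by simpa [← sub_eq_add_neg] using hθ')
    fun k => 2 * c₅ * w k
  refine ⟨Q, hmonic, hdeg, hirr, fun k hk => ?_⟩
  have hw : (q : ℝ) ^ (2 * (k : ℝ) - n) = w k := by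
    rw [show w k = q ^ k * (1 / q) ^ (n - k) from rfl, one_div, inv_pow, ← div_eq_mul_inv,
      ← Real.rpow_natCast, ← Real.rpow_natCast, ← Real.rpow_sub hq0, Nat.cast_sub hk]
    ring_nf
  have hc₅w : 0 < c₅ * w k := by positivity
  have herr : (n + 1) * 2 ^ n * (q ^ k * (1 / q) ^ (n - k)) = c₅ * w k / 2 := by ring
  obtain ⟨hlo, hhi⟩ := abs_le.1 (herr ▸ hQ k hk)
  rw [hw, abs_of_pos (by linarith)]
  constructor <;> linarith

/-- Existence of irreducible monic polynomials with controlled divided derivatives: if `q ≥ 1`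
is the denominator of a convergent of the irrational number `ξ` and `c₅ = (n+1)·2^(n+1)`,
then there is a monic polynomial `Q ∈ ℤ[T]` of degree `n+1`, irreducible over `ℚ`, with
`c₅ q^(2k-n) ≤ |Q^{[k]}(ξ)| ≤ 3 c₅ q^(2k-n)` for all `0 ≤ k ≤ n`. -/
theorem exists_irreducible_monic_poly_controlled
    (ξ : ℝ) (hξ : Irrational ξ) (n : ℕ) (hn : 0 < n) (q : ℕ)
    (hq : IsConvergentDenom ξ q) :
    ∃ Q : Polynomial ℤ, Q.Monic ∧ Q.natDegree = n + 1 ∧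
      Irreducible (Q.map (Int.castRingHom ℚ)) ∧
      ∀ k ≤ n,
        ((n : ℝ) + 1) * 2 ^ (n + 1) * (q : ℝ) ^ (2 * (k : ℝ) - n) ≤ |divDerivZ ξ Q k| ∧
        |divDerivZ ξ Q k| ≤ 3 * (((n : ℝ) + 1) * 2 ^ (n + 1)) * (q : ℝ) ^ (2 * (k : ℝ) - n) :=
  exists_irreducible_monic_poly_controlled_general ξ hξ n q hq
end
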